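/- Under the standing assumptions, in the word u_{(k−1)−(C+1)}' the vertices v_a and v_b are each made internal at least once, and the final time at which v_a is made internal in u_{(k−1)−(C+1)}' occurs strictly before the first time at which v_b is made internal in u_{(k−1)−(C+1)}'. -/

import Mathlib

namespace ThompsonAut

/-- The alphabet `X = {x₀, x₁, x₀⁻¹, x₁⁻¹}`. -/
inductive Letter : Type
  | x0 | x1 | x0inv | x1inv
  deriving DecidableEq

/-- A word over `X`. -/
abbrev Word := List Letter

/-- The four generating homeomorphisms, extended by the identity outside `[0,1]`. -/
noncomputable def letterFun : Letter → ℝ → ℝ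
  | Letter.x0 => fun x =>
      if x < 0 then x
      else if x ≤ 1/4 then 2*x
      else if x ≤ 1/2 then x + 1/4
      else if x ≤ 1 then (x+1)/2
      else x
  | Letter.x1 => fun x =>
      if x ≤ 1/2 then x
      else if x ≤ 5/8 then 2*x - 1/2
      else if x ≤ 3/4 then x + 1/8
      else if x ≤ 1 then (x+1)/2
      else x
  | Letter.x0inv => fun x =>
      if x < 0 then x
      else if x ≤ 1/2 then x/2
      else if x ≤ 3/4 then x - 1/4
      else if x ≤ 1 then 2*x - 1
      else x
  | Letter.x1inv => fun x =>
      if x ≤ 1/2 then x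
      else if x ≤ 3/4 then x/2 + 1/4
      else if x ≤ 7/8 then x - 1/8
      else if x ≤ 1 then 2*x - 1
      else x

/-- The element of `F` represented by a word, composing the letters left-to-right. -/
noncomputable def wordEval (w : Word) (x : ℝ) : ℝ :=
  w.foldl (fun y l => letterFun l y) x

/-- Dyadic rational numbers. -/
def IsDyadic (x : ℝ) : Prop := ∃ (a : ℤ) (n : ℕ), x = (a : ℝ) / 2 ^ n

/-- Membership in Thompson's group `F`: (extended-by-identity) piecewise-linear
homeomorphisms of `[0,1]`, differentiable except at finitely many dyadic rationals,
all slopes integral powers of `2`. -/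
def InF (f : ℝ → ℝ) : Prop :=
  StrictMono f ∧ Function.Bijective f ∧
    (∀ x : ℝ, x ≤ 0 → f x = x) ∧ (∀ x : ℝ, 1 ≤ x → f x = x) ∧
    ∃ D : Finset ℝ, (∀ x ∈ D, IsDyadic x) ∧
      ∀ x : ℝ, x ∉ D → ∃ n : ℤ, HasDerivAt f ((2 : ℝ) ^ n) x

/-- `|g|_X`: the minimal length of a word over `X` representing `g`. -/
noncomputable def glen (f : ℝ → ℝ) : ℕ :=
  sInf {n : ℕ | ∃ w : Word, wordEval w = f ∧ w.length = n}

/-- `|f⁻¹ g|_X` (left-to-right composition: apply `f⁻¹` first, then `g`). -/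
noncomputable def groupDist (f g : ℝ → ℝ) : ℕ :=
  glen (fun x => g (Function.invFun f x))

/-- The `M`-fellow-traveler property for pairs of words of `L` representing elements
at distance at most one in the Cayley graph. -/
def FellowTraveler (L : Set Word) (M : ℕ) : Prop :=
  ∀ w ∈ L, ∀ v ∈ L, groupDist (wordEval w) (wordEval v) ≤ 1 →
    ∀ t : ℕ, groupDist (wordEval (w.take t)) (wordEval (v.take t)) ≤ M

/-- `w_i = x₀^{-(k-1)} x₁⁻¹ x₀^{2k} x₁⁻¹ x₀^{-i}`. -/
def wword (k i : ℕ) : Word :=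
  List.replicate (k - 1) Letter.x0inv ++ [Letter.x1inv] ++
    List.replicate (2 * k) Letter.x0 ++ [Letter.x1inv] ++ List.replicate i Letter.x0inv

/-- `f_k = x₀^{-(k-1)} x₁⁻¹ x₀^{2k} x₁⁻¹ x₀^{-k}`. -/
def fword (k : ℕ) : Word := wword k k

/-- `u_i = x₀^{k+1} x₁⁻¹ x₀^{-(2k-1)} x₁⁻¹ x₀^{i}`. -/
def uword (k i : ℕ) : Word :=
  List.replicate (k + 1) Letter.x0 ++ [Letter.x1inv] ++
    List.replicate (2 * k - 1) Letter.x0inv ++ [Letter.x1inv] ++ List.replicate i Letter.x0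

/-- `g_k = x₀^{k+1} x₁⁻¹ x₀^{-(2k-1)} x₁⁻¹ x₀^{k-1}`. -/
def gword (k : ℕ) : Word := uword k (k - 1)

/-- A vertex of the infinite binary tree: the standard dyadic interval
`[idx/2^depth, (idx+1)/2^depth]`. -/
structure Vertex : Type where
  depth : ℕ
  idx : ℕ
  isLt : idx < 2 ^ depth

/-- The midpoint of the standard dyadic interval of a vertex. -/
noncomputable def Vertex.mid (v : Vertex) : ℝ := (2 * v.idx + 1) / 2 ^ (v.depth + 1)

/-- The depth of the lowest common ancestor of two vertices of the tree. -/
noncomputable def lcaDepth (u v : Vertex) : ℕ :=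
  sSup {j : ℕ | j ≤ u.depth ∧ j ≤ v.depth ∧
    u.idx / 2 ^ (u.depth - j) = v.idx / 2 ^ (v.depth - j)}

/-- The number of edges on the geodesic path between two vertices of the tree. -/
noncomputable def treeDist (u v : Vertex) : ℕ :=
  (u.depth - lcaDepth u v) + (v.depth - lcaDepth u v)

/-- The pivot vertex `[1/2, 1]`. -/
def pivotVertex : Vertex := ⟨1, 1, by norm_num⟩

/-- Tree distance from the vertex with midpoint `y` to the pivot `[1/2, 1]`. -/
noncomputable def distToPivot (y : ℝ) : ℕ :=
  sInf {d : ℕ | ∃ u : Vertex, Vertex.mid u = y ∧ treeDist u pivotVertex = d}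

/-- `d_a(w(t))` for the vertex with midpoint `v`. -/
noncomputable def dA (w : Word) (t : ℕ) (v : ℝ) : ℕ :=
  distToPivot (wordEval (w.take t) v)

/-- Midpoints of exterior vertices: `[0, 2^{-p}]` (`p ≥ 0`) or `[1 - 2^{-q}, 1]` (`q ≥ 1`). -/
def IsExteriorMid (x : ℝ) : Prop :=
  (∃ p : ℕ, x = (1/2 : ℝ) ^ (p + 1)) ∨ (∃ q : ℕ, 1 ≤ q ∧ x = 1 - (1/2 : ℝ) ^ (q + 1))

/-- Midpoints of interior vertices. -/
def IsInteriorMid (x : ℝ) : Prop :=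
  IsDyadic x ∧ 0 < x ∧ x < 1 ∧ ¬ IsExteriorMid x

/-- The vertex with midpoint `v` is internal at time `t` in `w`. -/
def internalAt (w : Word) (t : ℕ) (v : ℝ) : Prop :=
  IsInteriorMid (wordEval (w.take t) v)

/-- The vertex with midpoint `v` is made internal at time `t` in `w`. -/
def madeInternalAt (w : Word) (t : ℕ) (v : ℝ) : Prop :=
  wordEval (w.take t) v = 5/8 ∧ wordEval (w.take (t - 1)) v = 3/4

/-- The vertex with midpoint `v` is made external at time `t` in `w`. -/
def madeExternalAt (w : Word) (t : ℕ) (v : ℝ) : Prop :=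
  wordEval (w.take t) v = 3/4 ∧ wordEval (w.take (t - 1)) v = 5/8

/-- Midpoint of `v_a = [0, 2^{-k}]`. -/
noncomputable def vaMid (k : ℕ) : ℝ := (1/2 : ℝ) ^ (k + 1)

/-- Midpoint of `v_b = [1 - 2^{-k}, 1]`. -/
noncomputable def vbMid (k : ℕ) : ℝ := 1 - (1/2 : ℝ) ^ (k + 1)

/-- Midpoints of the vertices of `A = {[0, 2^{-p}] : 0 ≤ p ≤ k-1}`. -/
def Amid (k : ℕ) : Set ℝ := {x | ∃ p : ℕ, p ≤ k - 1 ∧ x = (1/2 : ℝ) ^ (p + 1)}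

/-- Midpoints of the vertices of `B = {[1 - 2^{-q}, 1] : 1 ≤ q ≤ k-1}`. -/
def Bmid (k : ℕ) : Set ℝ := {x | ∃ q : ℕ, 1 ≤ q ∧ q ≤ k - 1 ∧ x = 1 - (1/2 : ℝ) ^ (q + 1)}

/-- Condition (1) for the `w_i'` words: `v_a` and `v_b` are each made internal at least
once, and the final time `v_b` is made internal is strictly before the first time `v_a`
is made internal. -/
def CondW1 (w : Word) (k : ℕ) : Prop :=
  (∃ t : ℕ, madeInternalAt w t (vbMid k)) ∧ (∃ t : ℕ, madeInternalAt w t (vaMid k)) ∧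
    ∀ s t : ℕ, madeInternalAt w s (vbMid k) → madeInternalAt w t (vaMid k) → s < t

/-- Condition (2) for the `w_i'` words: no vertex of `B` is internal at any time at
which `v_a` is made internal. -/
def CondW2 (w : Word) (k : ℕ) : Prop :=
  ∀ t : ℕ, madeInternalAt w t (vaMid k) → ∀ x ∈ Bmid k, ¬ internalAt w t x

/-- Condition (1) for the `u_i'` words: `v_a` and `v_b` are each made internal at least
once, and the final time `v_a` is made internal is strictly before the first time `v_b`
is made internal. -/
def CondU1 (w : Word) (k : ℕ) : Prop :=
  (∃ t : ℕ, madeInternalAt w t (vaMid k)) ∧ (∃ t : ℕ, madeInternalAt w t (vbMid k)) ∧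
    ∀ s t : ℕ, madeInternalAt w s (vaMid k) → madeInternalAt w t (vbMid k) → s < t

/-- Condition (2) for the `u_i'` words: at the final time at which `v_a` is made
internal, at most `C` of the vertices of `B` are internal. -/
def CondU2 (w : Word) (k C : ℕ) : Prop :=
  ∀ t : ℕ, madeInternalAt w t (vaMid k) → (∀ s : ℕ, madeInternalAt w s (vaMid k) → s ≤ t) →
    {x ∈ Bmid k | internalAt w t x}.Finite ∧ {x ∈ Bmid k | internalAt w t x}.ncard ≤ C

/-- A language over `X` is regular iff it is accepted by a finite state automaton. -/
def IsRegularLang (L : Set Word) : Prop :=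
  ∃ (σ : Type) (_ : Fintype σ) (M : DFA Letter σ), ∀ w : Word, w ∈ M.accepts ↔ w ∈ L


set_option maxHeartbeats 2000000



/-- inverse letter -/
def invLetter : Letter → Letter
  | Letter.x0 => Letter.x0inv
  | Letter.x0inv => Letter.x0
  | Letter.x1 => Letter.x1inv
  | Letter.x1inv => Letter.x1

set_option maxHeartbeats 2000000 in
lemma letter_strictMono (l : Letter) : StrictMono (letterFun l) := by
  intro x y hxy
  cases l <;> simp only [letterFun] <;> split_ifs <;> linarith

set_option maxHeartbeats 2000000 in
lemma letter_inv_comp (l : Letter) (y : ℝ) :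
    letterFun (invLetter l) (letterFun l y) = y := by
  cases l <;> simp only [letterFun, invLetter] <;> split_ifs <;> linarith

set_option maxHeartbeats 2000000 in
lemma letter_comp_inv (l : Letter) (y : ℝ) :
    letterFun l (letterFun (invLetter l) y) = y := by
  cases l <;> simp only [letterFun, invLetter] <;> split_ifs <;> linarith

lemma letter_bijective (l : Letter) : Function.Bijective (letterFun l) :=
  ⟨(letter_strictMono l).injective,
   fun y => ⟨letterFun (invLetter l) y, letter_comp_inv l y⟩⟩

set_option maxHeartbeats 2000000 in
lemma letter_low (l : Letter) {x : ℝ} (hx : x ≤ 0) : letterFun l x = x := by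
  cases l <;> simp only [letterFun] <;> split_ifs <;> linarith

set_option maxHeartbeats 2000000 in
lemma letter_high (l : Letter) {x : ℝ} (hx : 1 ≤ x) : letterFun l x = x := by
  cases l <;> simp only [letterFun] <;> split_ifs <;> linarith

set_option maxHeartbeats 2000000 in
lemma letter_mem (l : Letter) {x : ℝ} (h0 : 0 < x) (h1 : x < 1) :
    0 < letterFun l x ∧ letterFun l x < 1 := by
  cases l <;> simp only [letterFun] <;> split_ifs <;> constructor <;> linarith

lemma wordEval_nil (x : ℝ) : wordEval [] x = x := rfl

lemma wordEval_cons (l : Letter) (w : Word) (x : ℝ) :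
    wordEval (l :: w) x = wordEval w (letterFun l x) := rfl

lemma wordEval_append (w v : Word) (x : ℝ) :
    wordEval (w ++ v) x = wordEval v (wordEval w x) := by
  simp [wordEval, List.foldl_append]

lemma wordEval_strictMono (w : Word) : StrictMono (wordEval w) := by
  induction w with
  | nil => exact fun x y h => h
  | cons l w ih => exact fun x y h => ih (letter_strictMono l h)

lemma wordEval_bijective (w : Word) : Function.Bijective (wordEval w) := by
  induction w with
  | nil => exact Function.bijective_id
  | cons l w ih =>
    have : wordEval (l :: w) = (wordEval w) ∘ (letterFun l) := rfl
    rw [this]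
    exact ih.comp (letter_bijective l)

lemma wordEval_low (w : Word) {x : ℝ} (hx : x ≤ 0) : wordEval w x = x := by
  induction w with
  | nil => rfl
  | cons l w ih => rw [wordEval_cons, letter_low l hx]; exact ih

lemma wordEval_high (w : Word) {x : ℝ} (hx : 1 ≤ x) : wordEval w x = x := by
  induction w with
  | nil => rfl
  | cons l w ih => rw [wordEval_cons, letter_high l hx]; exact ih

lemma wordEval_mem (w : Word) {x : ℝ} (h0 : 0 < x) (h1 : x < 1) :
    0 < wordEval w x ∧ wordEval w x < 1 := by
  induction w generalizing x with
  | nil => exact ⟨h0, h1⟩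
  | cons l w ih =>
    rw [wordEval_cons]
    obtain ⟨a, b⟩ := letter_mem l h0 h1
    exact ih a b

def invWord (w : Word) : Word := (w.map invLetter).reverse

lemma wordEval_invWord (w : Word) (x : ℝ) :
    wordEval (invWord w) (wordEval w x) = x := by
  induction w generalizing x with
  | nil => rfl
  | cons l w ih =>
    have h1 : invWord (l :: w) = invWord w ++ [invLetter l] := by
      simp [invWord]
    rw [wordEval_cons, h1, wordEval_append, ih]
    have : wordEval [invLetter l] (letterFun l x) = letterFun (invLetter l) (letterFun l x) := rfl
    rw [this, letter_inv_comp]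

lemma dyadic_affine (p q : ℤ) (m : ℕ) {x : ℝ} (h : IsDyadic x) :
    IsDyadic (((p : ℝ) * x + (q : ℝ)) / 2 ^ m) := by
  obtain ⟨a, n, rfl⟩ := h
  refine ⟨p * a + q * 2 ^ n, n + m, ?_⟩
  have h2 : (2 : ℝ) ^ n ≠ 0 := by positivity
  have h2' : (2 : ℝ) ^ (n + m) ≠ 0 := by positivity
  push_cast
  rw [eq_div_iff h2', pow_add]
  field_simp
  try ring1

lemma letter_dyadic (l : Letter) {x : ℝ} (h : IsDyadic x) : IsDyadic (letterFun l x) := by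
  have H : ∀ (p q : ℤ) (m : ℕ) (e : ℝ), e = ((p : ℝ) * x + (q : ℝ)) / 2 ^ m → IsDyadic e :=
    fun p q m e he => he ▸ dyadic_affine p q m h
  cases l <;> simp only [letterFun] <;> split_ifs
  all_goals first
    | (refine H 1 0 0 _ ?_; push_cast; rw [eq_div_iff (by positivity)]; ring1)
    | (refine H 2 0 0 _ ?_; push_cast; rw [eq_div_iff (by positivity)]; ring1)
    | (refine H 1 0 1 _ ?_; push_cast; rw [eq_div_iff (by positivity)]; ring1)
    | (refine H 4 1 2 _ ?_; push_cast; rw [eq_div_iff (by positivity)]; ring1)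
    | (refine H 1 1 1 _ ?_; push_cast; rw [eq_div_iff (by positivity)]; ring1)
    | (refine H 4 (-1) 2 _ ?_; push_cast; rw [eq_div_iff (by positivity)]; ring1)
    | (refine H 4 (-1) 1 _ ?_; push_cast; rw [eq_div_iff (by positivity)]; ring1)
    | (refine H 2 (-1) 0 _ ?_; push_cast; rw [eq_div_iff (by positivity)]; ring1)
    | (refine H 8 1 3 _ ?_; push_cast; rw [eq_div_iff (by positivity)]; ring1)
    | (refine H 2 1 2 _ ?_; push_cast; rw [eq_div_iff (by positivity)]; ring1)
    | (refine H 8 (-1) 3 _ ?_; push_cast; rw [eq_div_iff (by positivity)]; ring1)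

lemma wordEval_dyadic (w : Word) {x : ℝ} (h : IsDyadic x) : IsDyadic (wordEval w x) := by
  induction w generalizing x with
  | nil => exact h
  | cons l w ih => exact ih (letter_dyadic l h)

lemma wordEval_dyadic_rev (w : Word) {x : ℝ} (h : IsDyadic (wordEval w x)) : IsDyadic x := by
  have := wordEval_dyadic (invWord w) h
  rwa [wordEval_invWord] at this

lemma hasDerivAt_of_eq_affine {f : ℝ → ℝ} {lo hi a b y : ℝ}
    (h : ∀ z, lo < z → z < hi → f z = a * z + b) (h1 : lo < y) (h2 : y < hi) :
    HasDerivAt f a y := by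
  have hg : HasDerivAt (fun z => a * z + b) a y := by
    simpa using ((hasDerivAt_id y).const_mul a).add_const b
  refine hg.congr_of_eventuallyEq ?_
  filter_upwards [Ioo_mem_nhds h1 h2] with z hz using h z hz.1 hz.2

/-- the common break set -/
noncomputable def breaks : Finset ℝ := {0, 1/4, 1/2, 5/8, 3/4, 7/8, 1}

lemma breaks_dyadic : ∀ x ∈ breaks, IsDyadic x := by
  intro x hx
  simp only [breaks, Finset.mem_insert, Finset.mem_singleton] at hx
  rcases hx with h|h|h|h|h|h|h <;> subst h
  · exact ⟨0, 0, by norm_num⟩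
  · exact ⟨1, 2, by norm_num⟩
  · exact ⟨1, 1, by norm_num⟩
  · exact ⟨5, 3, by norm_num⟩
  · exact ⟨3, 2, by norm_num⟩
  · exact ⟨7, 3, by norm_num⟩
  · exact ⟨1, 0, by norm_num⟩

lemma letter_deriv (l : Letter) {y : ℝ} (hy : y ∉ breaks) :
    ∃ n : ℤ, HasDerivAt (letterFun l) ((2 : ℝ) ^ n) y := by
  simp only [breaks, Finset.mem_insert, Finset.mem_singleton, not_or] at hy
  obtain ⟨e0, e14, e12, e58, e34, e78, e1⟩ := hy
  have mk : ∀ (lo hi a b : ℝ) (n : ℤ), (2 : ℝ) ^ n = a →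
      (∀ z, lo < z → z < hi → letterFun l z = a * z + b) → lo < y → y < hi →
      ∃ n : ℤ, HasDerivAt (letterFun l) ((2 : ℝ) ^ n) y := by
    intro lo hi a b n ha h h1 h2
    exact ⟨n, ha ▸ hasDerivAt_of_eq_affine h h1 h2⟩
  cases l
  case x0 =>
    rcases lt_or_gt_of_ne e0 with h0|h0
    · exact mk (y-1) 0 1 0 0 (by norm_num)
        (fun z hz1 hz2 => by simp only [letterFun]; split_ifs <;> linarith) (by linarith) h0
    rcases lt_or_gt_of_ne e14 with h14|h14
    · exact mk 0 (1/4) 2 0 1 (by norm_num)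
        (fun z hz1 hz2 => by simp only [letterFun]; split_ifs <;> linarith) h0 h14
    rcases lt_or_gt_of_ne e12 with h12|h12
    · exact mk (1/4) (1/2) 1 (1/4) 0 (by norm_num)
        (fun z hz1 hz2 => by simp only [letterFun]; split_ifs <;> linarith) h14 h12
    rcases lt_or_gt_of_ne e1 with h1|h1
    · exact mk (1/2) 1 (1/2) (1/2) (-1) (by norm_num)
        (fun z hz1 hz2 => by simp only [letterFun]; split_ifs <;> linarith) h12 h1
    · exact mk 1 (y+1) 1 0 0 (by norm_num)
        (fun z hz1 hz2 => by simp only [letterFun]; split_ifs <;> linarith) h1 (by linarith)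
  case x1 =>
    rcases lt_or_gt_of_ne e12 with h12|h12
    · exact mk (y-1) (1/2) 1 0 0 (by norm_num)
        (fun z hz1 hz2 => by simp only [letterFun]; split_ifs <;> linarith) (by linarith) h12
    rcases lt_or_gt_of_ne e58 with h58|h58
    · exact mk (1/2) (5/8) 2 (-(1/2)) 1 (by norm_num)
        (fun z hz1 hz2 => by simp only [letterFun]; split_ifs <;> linarith) h12 h58
    rcases lt_or_gt_of_ne e34 with h34|h34
    · exact mk (5/8) (3/4) 1 (1/8) 0 (by norm_num)
        (fun z hz1 hz2 => by simp only [letterFun]; split_ifs <;> linarith) h58 h34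
    rcases lt_or_gt_of_ne e1 with h1|h1
    · exact mk (3/4) 1 (1/2) (1/2) (-1) (by norm_num)
        (fun z hz1 hz2 => by simp only [letterFun]; split_ifs <;> linarith) h34 h1
    · exact mk 1 (y+1) 1 0 0 (by norm_num)
        (fun z hz1 hz2 => by simp only [letterFun]; split_ifs <;> linarith) h1 (by linarith)
  case x0inv =>
    rcases lt_or_gt_of_ne e0 with h0|h0
    · exact mk (y-1) 0 1 0 0 (by norm_num)
        (fun z hz1 hz2 => by simp only [letterFun]; split_ifs <;> linarith) (by linarith) h0
    rcases lt_or_gt_of_ne e12 with h12|h12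
    · exact mk 0 (1/2) (1/2) 0 (-1) (by norm_num)
        (fun z hz1 hz2 => by simp only [letterFun]; split_ifs <;> linarith) h0 h12
    rcases lt_or_gt_of_ne e34 with h34|h34
    · exact mk (1/2) (3/4) 1 (-(1/4)) 0 (by norm_num)
        (fun z hz1 hz2 => by simp only [letterFun]; split_ifs <;> linarith) h12 h34
    rcases lt_or_gt_of_ne e1 with h1|h1
    · exact mk (3/4) 1 2 (-1) 1 (by norm_num)
        (fun z hz1 hz2 => by simp only [letterFun]; split_ifs <;> linarith) h34 h1
    · exact mk 1 (y+1) 1 0 0 (by norm_num)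
        (fun z hz1 hz2 => by simp only [letterFun]; split_ifs <;> linarith) h1 (by linarith)
  case x1inv =>
    rcases lt_or_gt_of_ne e12 with h12|h12
    · exact mk (y-1) (1/2) 1 0 0 (by norm_num)
        (fun z hz1 hz2 => by simp only [letterFun]; split_ifs <;> linarith) (by linarith) h12
    rcases lt_or_gt_of_ne e34 with h34|h34
    · exact mk (1/2) (3/4) (1/2) (1/4) (-1) (by norm_num)
        (fun z hz1 hz2 => by simp only [letterFun]; split_ifs <;> linarith) h12 h34
    rcases lt_or_gt_of_ne e78 with h78|h78
    · exact mk (3/4) (7/8) 1 (-(1/8)) 0 (by norm_num)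
        (fun z hz1 hz2 => by simp only [letterFun]; split_ifs <;> linarith) h34 h78
    rcases lt_or_gt_of_ne e1 with h1|h1
    · exact mk (7/8) 1 2 (-1) 1 (by norm_num)
        (fun z hz1 hz2 => by simp only [letterFun]; split_ifs <;> linarith) h78 h1
    · exact mk 1 (y+1) 1 0 0 (by norm_num)
        (fun z hz1 hz2 => by simp only [letterFun]; split_ifs <;> linarith) h1 (by linarith)

lemma InF_wordEval (w : Word) : InF (wordEval w) := by
  classical
  induction w with
  | nil =>
    refine ⟨wordEval_strictMono [], wordEval_bijective [], fun x hx => wordEval_low [] hx,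
      fun x hx => wordEval_high [] hx,
      ∅, by simp, fun x _ => ⟨0, ?_⟩⟩
    have : HasDerivAt (fun x : ℝ => x) 1 x := hasDerivAt_id x
    exact this
  | cons l w ih =>
    obtain ⟨_, _, _, _, D, hD, hd⟩ := ih
    refine ⟨wordEval_strictMono _, wordEval_bijective _, fun x hx => wordEval_low _ hx,
      fun x hx => wordEval_high _ hx,
      D.image (letterFun (invLetter l)) ∪ breaks, ?_, ?_⟩
    · intro x hx
      rcases Finset.mem_union.1 hx with hx | hx
      · obtain ⟨z, hz, rfl⟩ := Finset.mem_image.1 hx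
        exact letter_dyadic _ (hD z hz)
      · exact breaks_dyadic x hx
    · intro x hx
      rw [Finset.mem_union, not_or] at hx
      obtain ⟨hx1, hx2⟩ := hx
      obtain ⟨j, hj⟩ := letter_deriv l hx2
      have hfx : letterFun l x ∉ D := by
        intro hmem
        exact hx1 (Finset.mem_image.2 ⟨letterFun l x, hmem, letter_inv_comp l x⟩)
      obtain ⟨m, hm⟩ := hd (letterFun l x) hfx
      refine ⟨m + j, ?_⟩
      have hcomp := HasDerivAt.comp x hm hj
      rw [zpow_add₀ (by norm_num : (2:ℝ) ≠ 0)]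
      exact hcomp

/-- the spine coordinate -/
noncomputable def alpha (y : ℝ) : ℤ :=
  if y ≤ 1/2 then Int.clog 2 y + 1 else -(Int.log 2 (1-y)) - 1

lemma two_zpow_pos (n : ℤ) : (0:ℝ) < 2 ^ n := by positivity

lemma zpow_succ' (n : ℤ) : (2:ℝ) ^ (n+1) = 2 * 2 ^ n := by
  rw [zpow_add_one₀ (by norm_num : (2:ℝ) ≠ 0)]; ring

lemma zpow_pred' (n : ℤ) : (2:ℝ) ^ (n-1) = 2 ^ n / 2 := by
  rw [zpow_sub_one₀ (by norm_num : (2:ℝ) ≠ 0)]; ring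

lemma half_pow (n : ℕ) : ((1/2:ℝ)) ^ n = (2:ℝ) ^ (-(n:ℤ)) := by
  rw [one_div, inv_pow, ← zpow_natCast, ← zpow_neg]

lemma clog_eq {y : ℝ} {n : ℤ} (hy : 0 < y) (h1 : (2:ℝ)^(n-1) < y) (h2 : y ≤ (2:ℝ)^n) :
    Int.clog 2 y = n := by
  have hb : 1 < 2 := one_lt_two
  have hle : Int.clog 2 y ≤ n := by
    rw [← Int.le_zpow_iff_clog_le hb hy]
    exact_mod_cast h2
  have hlt : n - 1 < Int.clog 2 y := by
    rw [← Int.zpow_lt_iff_lt_clog hb hy]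
    exact_mod_cast h1
  omega

lemma log_eq {r : ℝ} {n : ℤ} (hr : 0 < r) (h1 : (2:ℝ)^n ≤ r) (h2 : r < (2:ℝ)^(n+1)) :
    Int.log 2 r = n := by
  have hb : 1 < 2 := one_lt_two
  have hle : n ≤ Int.log 2 r := by
    rw [← Int.zpow_le_iff_le_log hb hr]
    exact_mod_cast h1
  have hlt : Int.log 2 r < n + 1 := by
    rw [← Int.lt_zpow_iff_log_lt hb hr]
    exact_mod_cast h2
  omega

lemma alpha_left {y : ℝ} {n : ℤ} (h0 : 0 < y) (h1 : (2:ℝ)^(n-1) < y) (h2 : y ≤ (2:ℝ)^n)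
    (hn : n ≤ -1) : alpha y = n + 1 := by
  have hy2 : y ≤ 1/2 := by
    refine h2.trans ?_
    calc (2:ℝ)^n ≤ 2^(-1:ℤ) := zpow_le_zpow_right₀ (by norm_num) hn
    _ = 1/2 := by norm_num
  rw [alpha, if_pos hy2, clog_eq h0 h1 h2]

lemma alpha_right {y : ℝ} {n : ℤ} (hy : 1/2 < y) (h1 : (2:ℝ)^n ≤ 1 - y)
    (h2 : 1 - y < (2:ℝ)^(n+1)) : alpha y = -n - 1 := by
  have h0 : 0 < 1 - y := lt_of_lt_of_le (two_zpow_pos n) h1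
  rw [alpha, if_neg (by linarith), log_eq h0 h1 h2]

lemma clog_bounds {y : ℝ} (h0 : 0 < y) :
    (2:ℝ)^(Int.clog 2 y - 1) < y ∧ y ≤ (2:ℝ)^(Int.clog 2 y) := by
  constructor
  · exact_mod_cast Int.zpow_pred_clog_lt_self (one_lt_two) h0
  · exact_mod_cast Int.self_le_zpow_clog (one_lt_two) y

lemma log_bounds {r : ℝ} (h0 : 0 < r) :
    (2:ℝ)^(Int.log 2 r) ≤ r ∧ r < (2:ℝ)^(Int.log 2 r + 1) := by
  constructor
  · exact_mod_cast Int.zpow_log_le_self (one_lt_two) h0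
  · exact_mod_cast Int.lt_zpow_succ_log_self (one_lt_two) r

lemma alpha_left_val {y : ℝ} (h2 : y ≤ 1/2) :
    alpha y = Int.clog 2 y + 1 := by rw [alpha, if_pos h2]

lemma alpha_right_val {y : ℝ} (h2 : 1/2 < y) :
    alpha y = -(Int.log 2 (1-y)) - 1 := by rw [alpha, if_neg (by linarith)]

/-- `x0` increases `alpha` by one on `(0,1)`. -/
lemma alpha_x0 {y : ℝ} (h0 : 0 < y) (h1 : y < 1) :
    alpha (letterFun Letter.x0 y) = alpha y + 1 := by
  rcases le_or_gt y (1/4) with h|h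
  · have hval : letterFun Letter.x0 y = 2*y := by
      simp only [letterFun]; rw [if_neg (by linarith), if_pos h]
    obtain ⟨hb1, hb2⟩ := clog_bounds h0
    set n := Int.clog 2 y with hn
    have hne : n ≤ -2 := by
      by_contra hc
      push_neg at hc
      have h4 : (2:ℝ)^(-2:ℤ) ≤ 2^(n-1) := zpow_le_zpow_right₀ (by norm_num) (by omega)
      have h5 : (2:ℝ)^(-2:ℤ) < y := lt_of_le_of_lt h4 hb1
      norm_num at h5
      linarith
    have ha : alpha y = n + 1 := alpha_left h0 hb1 hb2 (by omega)
    have ha2 : alpha (2*y) = (n+1) + 1 := by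
      have e1 : (2:ℝ)^(n+1-1) = 2^n := by norm_num
      have e2 := zpow_succ' n
      have e3 := zpow_pred' n
      refine alpha_left (y := 2*y) (n := n+1) (by linarith) (by rw [e1]; linarith)
        (by rw [e2]; linarith) (by omega)
    rw [hval, ha2, ha]
  rcases le_or_gt y (1/2) with h'|h'
  · have hval : letterFun Letter.x0 y = y + 1/4 := by
      simp only [letterFun]; rw [if_neg (by linarith), if_neg (by linarith), if_pos h']
    have ha : alpha y = 0 := by
      have := alpha_left (y := y) (n := -1) h0 (by norm_num; linarith) (by norm_num; linarith)
        (by norm_num)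
      simpa using this
    have ha2 : alpha (y + 1/4) = 1 := by
      have := alpha_right (y := y + 1/4) (n := -2) (by linarith) (by norm_num; linarith)
        (by norm_num; linarith)
      simpa using this
    rw [hval, ha2, ha]; norm_num
  · have hval : letterFun Letter.x0 y = (y+1)/2 := by
      simp only [letterFun]
      rw [if_neg (by linarith), if_neg (by linarith), if_neg (by linarith), if_pos (by linarith)]
    obtain ⟨hb1, hb2⟩ := log_bounds (by linarith : (0:ℝ) < 1 - y)
    set n := Int.log 2 (1-y) with hn
    have ha : alpha y = -n - 1 := alpha_right h' hb1 hb2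
    have ha2 : alpha ((y+1)/2) = -(n-1) - 1 := by
      have e : 1 - (y+1)/2 = (1-y)/2 := by ring
      have e1 : n - 1 + 1 = n := by ring
      have e2 := zpow_pred' n
      have e3 := zpow_succ' n
      refine alpha_right (y := (y+1)/2) (n := n - 1) (by linarith) ?_ ?_
      · rw [e, e2]; linarith
      · rw [e, e1]; linarith
    rw [hval, ha2, ha]; ring

/-- `x0inv` decreases `alpha` by one on `(0,1)`. -/
lemma alpha_x0inv {y : ℝ} (h0 : 0 < y) (h1 : y < 1) :
    alpha (letterFun Letter.x0inv y) = alpha y - 1 := by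
  rcases le_or_gt y (1/2) with h|h
  · have hval : letterFun Letter.x0inv y = y/2 := by
      simp only [letterFun]; rw [if_neg (by linarith), if_pos h]
    obtain ⟨hb1, hb2⟩ := clog_bounds h0
    set n := Int.clog 2 y with hn
    have hne : n ≤ -1 := by
      by_contra hc
      push_neg at hc
      have h4 : (2:ℝ)^(-1:ℤ) ≤ 2^(n-1) := zpow_le_zpow_right₀ (by norm_num) (by omega)
      have h5 : (2:ℝ)^(-1:ℤ) < y := lt_of_le_of_lt h4 hb1
      norm_num at h5
      linarith
    have ha : alpha y = n + 1 := alpha_left h0 hb1 hb2 hne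
    have ha2 : alpha (y/2) = (n-1) + 1 := by
      have e1 : (2:ℝ)^(n-1-1) = 2^(n-1)/2 := zpow_pred' (n-1)
      have e2 := zpow_pred' n
      refine alpha_left (y := y/2) (n := n-1) (by linarith) ?_ ?_ (by omega)
      · rw [e1, e2]; linarith
      · rw [e2]; linarith
    rw [hval, ha2, ha]; ring
  rcases le_or_gt y (3/4) with h'|h'
  · have hval : letterFun Letter.x0inv y = y - 1/4 := by
      simp only [letterFun]; rw [if_neg (by linarith), if_neg (by linarith), if_pos h']
    have ha : alpha y = 1 := by
      have := alpha_right (y := y) (n := -2) h (by norm_num; linarith) (by norm_num; linarith)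
      simpa using this
    have ha2 : alpha (y - 1/4) = 0 := by
      have := alpha_left (y := y - 1/4) (n := -1) (by linarith) (by norm_num; linarith)
        (by norm_num; linarith) (by norm_num)
      simpa using this
    rw [hval, ha2, ha]; ring
  · have hval : letterFun Letter.x0inv y = 2*y - 1 := by
      simp only [letterFun]
      rw [if_neg (by linarith), if_neg (by linarith), if_neg (by linarith), if_pos (by linarith)]
    obtain ⟨hb1, hb2⟩ := log_bounds (by linarith : (0:ℝ) < 1 - y)
    set n := Int.log 2 (1-y) with hn
    have ha : alpha y = -n - 1 := alpha_right (by linarith) hb1 hb2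
    have ha2 : alpha (2*y - 1) = -(n+1) - 1 := by
      have e : 1 - (2*y - 1) = 2*(1-y) := by ring
      have e1 := zpow_succ' n
      have e2 := zpow_succ' (n+1)
      refine alpha_right (y := 2*y - 1) (n := n+1) (by linarith) ?_ ?_
      · rw [e, e1]; linarith
      · rw [e, e2, e1]; linarith
    rw [hval, ha2, ha]; ring

/-- `x1` fixes `alpha` below `5/8` and increases it by one above. -/
lemma alpha_x1_low {y : ℝ} (h0 : 0 < y) (h1 : y ≤ 5/8) :
    alpha (letterFun Letter.x1 y) = alpha y := by
  rcases le_or_gt y (1/2) with h|h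
  · have hval : letterFun Letter.x1 y = y := by
      simp only [letterFun]; rw [if_pos h]
    rw [hval]
  · have hval : letterFun Letter.x1 y = 2*y - 1/2 := by
      simp only [letterFun]; rw [if_neg (by linarith), if_pos h1]
    have ha : alpha y = 1 := by
      have := alpha_right (y := y) (n := -2) h (by norm_num; linarith) (by norm_num; linarith)
      simpa using this
    have ha2 : alpha (2*y - 1/2) = 1 := by
      have := alpha_right (y := 2*y - 1/2) (n := -2) (by linarith) (by norm_num; linarith)
        (by norm_num; linarith)
      simpa using this
    rw [hval, ha2, ha]

lemma alpha_x1_high {y : ℝ} (h0 : 5/8 < y) (h1 : y < 1) :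
    alpha (letterFun Letter.x1 y) = alpha y + 1 := by
  rcases le_or_gt y (3/4) with h|h
  · have hval : letterFun Letter.x1 y = y + 1/8 := by
      simp only [letterFun]; rw [if_neg (by linarith), if_neg (by linarith), if_pos h]
    have ha : alpha y = 1 := by
      have := alpha_right (y := y) (n := -2) (by linarith) (by norm_num; linarith)
        (by norm_num; linarith)
      simpa using this
    have ha2 : alpha (y + 1/8) = 2 := by
      have := alpha_right (y := y + 1/8) (n := -3) (by linarith) (by norm_num; linarith)
        (by norm_num; linarith)
      simpa using this
    rw [hval, ha2, ha]; norm_num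
  · have hval : letterFun Letter.x1 y = (y+1)/2 := by
      simp only [letterFun]
      rw [if_neg (by linarith), if_neg (by linarith), if_neg (by linarith), if_pos (by linarith)]
    obtain ⟨hb1, hb2⟩ := log_bounds (by linarith : (0:ℝ) < 1 - y)
    set n := Int.log 2 (1-y) with hn
    have ha : alpha y = -n - 1 := alpha_right (by linarith) hb1 hb2
    have ha2 : alpha ((y+1)/2) = -(n-1) - 1 := by
      have e : 1 - (y+1)/2 = (1-y)/2 := by ring
      have e1 : n - 1 + 1 = n := by ring
      have e2 := zpow_pred' n
      have e3 := zpow_succ' n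
      refine alpha_right (y := (y+1)/2) (n := n-1) (by linarith) ?_ ?_
      · rw [e, e2]; linarith
      · rw [e, e1]; linarith
    rw [hval, ha2, ha]; ring

/-- `x1inv` fixes `alpha` below `3/4` and decreases it by one above. -/
lemma alpha_x1inv_low {y : ℝ} (h0 : 0 < y) (h1 : y ≤ 3/4) :
    alpha (letterFun Letter.x1inv y) = alpha y := by
  rcases le_or_gt y (1/2) with h|h
  · have hval : letterFun Letter.x1inv y = y := by
      simp only [letterFun]; rw [if_pos h]
    rw [hval]
  · have hval : letterFun Letter.x1inv y = y/2 + 1/4 := by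
      simp only [letterFun]; rw [if_neg (by linarith), if_pos h1]
    have ha : alpha y = 1 := by
      have := alpha_right (y := y) (n := -2) h (by norm_num; linarith) (by norm_num; linarith)
      simpa using this
    have ha2 : alpha (y/2 + 1/4) = 1 := by
      have := alpha_right (y := y/2 + 1/4) (n := -2) (by linarith) (by norm_num; linarith)
        (by norm_num; linarith)
      simpa using this
    rw [hval, ha2, ha]

lemma alpha_x1inv_high {y : ℝ} (h0 : 3/4 < y) (h1 : y < 1) :
    alpha (letterFun Letter.x1inv y) = alpha y - 1 := by
  rcases le_or_gt y (7/8) with h|h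
  · have hval : letterFun Letter.x1inv y = y - 1/8 := by
      simp only [letterFun]; rw [if_neg (by linarith), if_neg (by linarith), if_pos h]
    have ha : alpha y = 2 := by
      have := alpha_right (y := y) (n := -3) (by linarith) (by norm_num; linarith)
        (by norm_num; linarith)
      simpa using this
    have ha2 : alpha (y - 1/8) = 1 := by
      have := alpha_right (y := y - 1/8) (n := -2) (by linarith) (by norm_num; linarith)
        (by norm_num; linarith)
      simpa using this
    rw [hval, ha2, ha]; ring
  · have hval : letterFun Letter.x1inv y = 2*y - 1 := by
      simp only [letterFun]
      rw [if_neg (by linarith), if_neg (by linarith), if_neg (by linarith), if_pos (by linarith)]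
    obtain ⟨hb1, hb2⟩ := log_bounds (by linarith : (0:ℝ) < 1 - y)
    set n := Int.log 2 (1-y) with hn
    have ha : alpha y = -n - 1 := alpha_right (by linarith) hb1 hb2
    have ha2 : alpha (2*y - 1) = -(n+1) - 1 := by
      have e : 1 - (2*y - 1) = 2*(1-y) := by ring
      have e1 := zpow_succ' n
      have e2 := zpow_succ' (n+1)
      refine alpha_right (y := 2*y - 1) (n := n+1) (by linarith) ?_ ?_
      · rw [e, e1]; linarith
      · rw [e, e2, e1]; linarith
    rw [hval, ha2, ha]; ring

lemma alpha_34 : alpha (3/4 : ℝ) = 1 := by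
  have := alpha_right (y := (3/4:ℝ)) (n := -2) (by norm_num) (by norm_num) (by norm_num)
  simpa using this

lemma alpha_58 : alpha (5/8 : ℝ) = 1 := by
  have := alpha_right (y := (5/8:ℝ)) (n := -2) (by norm_num) (by norm_num) (by norm_num)
  simpa using this

lemma alpha_le_one {y : ℝ} (h0 : 0 < y) (h1 : y ≤ 3/4) : alpha y ≤ 1 := by
  rcases le_or_gt y (1/2) with h|h
  · rw [alpha_left_val h]
    have : Int.clog 2 y ≤ -1 := by
      rw [← Int.le_zpow_iff_clog_le one_lt_two h0]
      show y ≤ ((2:ℕ):ℝ)^(-1:ℤ)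
      push_cast
      norm_num
      linarith
    omega
  · rw [alpha_right_val h]
    have : (-2 : ℤ) ≤ Int.log 2 (1-y) := by
      rw [← Int.zpow_le_iff_le_log one_lt_two (by linarith : (0:ℝ) < 1 - y)]
      show ((2:ℕ):ℝ)^(-2:ℤ) ≤ 1 - y
      push_cast
      norm_num
      linarith
    omega

lemma alpha_pow_left {m : ℕ} (hm : 1 ≤ m) : alpha ((1/2:ℝ)^m) = -(m:ℤ) + 1 := by
  rw [half_pow]
  have e := zpow_pred' (-(m:ℤ))
  have := alpha_left (n := -(m:ℤ)) (y := (2:ℝ)^(-(m:ℤ))) (two_zpow_pos _)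
    (by rw [e]; nlinarith [two_zpow_pos (-(m:ℤ))]) le_rfl (by omega)
  simpa using this

lemma alpha_pow_right {m : ℕ} (hm : 2 ≤ m) : alpha (1 - (1/2:ℝ)^m) = (m:ℤ) - 1 := by
  rw [half_pow]
  have h12 : (2:ℝ)^(-(m:ℤ)) ≤ 1/4 := by
    calc (2:ℝ)^(-(m:ℤ)) ≤ 2^(-2:ℤ) := zpow_le_zpow_right₀ (by norm_num) (by omega)
    _ = 1/4 := by norm_num
  have e : (1:ℝ) - (1 - (2:ℝ)^(-(m:ℤ))) = 2^(-(m:ℤ)) := by ring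
  have e1 := zpow_succ' (-(m:ℤ))
  have := alpha_right (n := -(m:ℤ)) (y := 1 - (2:ℝ)^(-(m:ℤ)))
    (by linarith) (by rw [e]) (by rw [e, e1]; nlinarith [two_zpow_pos (-(m:ℤ))])
  rw [this]; ring

lemma alpha_3pow_left {m : ℕ} (hm : 3 ≤ m) : alpha (3 * (1/2:ℝ)^m) = 3 - (m:ℤ) := by
  rw [half_pow]
  have e1 : (2:ℝ)^(-(m:ℤ) + 2 - 1) = 2 * 2^(-(m:ℤ)) := by
    rw [show (-(m:ℤ) + 2 - 1) = -(m:ℤ) + 1 by ring, zpow_succ']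
  have e2 : (2:ℝ)^(-(m:ℤ) + 2) = 4 * 2^(-(m:ℤ)) := by
    rw [show (-(m:ℤ) + 2) = (-(m:ℤ) + 1) + 1 by ring, zpow_succ', zpow_succ']; ring
  have := alpha_left (n := -(m:ℤ) + 2) (y := 3 * (2:ℝ)^(-(m:ℤ)))
    (by positivity) (by rw [e1]; nlinarith [two_zpow_pos (-(m:ℤ))])
    (by rw [e2]; nlinarith [two_zpow_pos (-(m:ℤ))]) (by omega)
  rw [this]; ring

lemma alpha_3pow_right {m : ℕ} (hm : 3 ≤ m) : alpha (1 - 3 * (1/2:ℝ)^m) = (m:ℤ) - 2 := by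
  rw [half_pow]
  have e : (1:ℝ) - (1 - 3 * (2:ℝ)^(-(m:ℤ))) = 3 * 2^(-(m:ℤ)) := by ring
  have e1 : (2:ℝ)^(-(m:ℤ) + 1) = 2 * 2^(-(m:ℤ)) := zpow_succ' _
  have e2 : (2:ℝ)^(-(m:ℤ) + 1 + 1) = 4 * 2^(-(m:ℤ)) := by
    rw [zpow_succ', zpow_succ']; ring
  have h8 : (2:ℝ)^(-(m:ℤ)) ≤ 1/8 := by
    calc (2:ℝ)^(-(m:ℤ)) ≤ 2^(-3:ℤ) := zpow_le_zpow_right₀ (by norm_num) (by omega)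
    _ = 1/8 := by norm_num
  have := alpha_right (n := -(m:ℤ) + 1) (y := 1 - 3 * (2:ℝ)^(-(m:ℤ)))
    (by nlinarith [two_zpow_pos (-(m:ℤ))]) (by rw [e, e1]; nlinarith [two_zpow_pos (-(m:ℤ))])
    (by rw [e, e2]; nlinarith [two_zpow_pos (-(m:ℤ))])
  rw [this]; ring

lemma hpow_pos (n : ℕ) : (0:ℝ) < (1/2)^n := by positivity

lemma hpow_mono {m n : ℕ} (h : m ≤ n) : ((1/2:ℝ))^n ≤ (1/2)^m :=
  pow_le_pow_of_le_one (by norm_num) (by norm_num) h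

lemma hpow_succ (n : ℕ) : ((1/2:ℝ))^(n+1) = (1/2) * (1/2)^n := by rw [pow_succ]; ring

lemma hpow_pred {m : ℕ} (hm : 1 ≤ m) : ((1/2:ℝ))^(m-1) = 2*(1/2)^m := by
  have h : m - 1 + 1 = m := by omega
  calc ((1/2:ℝ))^(m-1) = 2*((1/2)*(1/2)^(m-1)) := by ring
  _ = 2*(1/2)^(m-1+1) := by rw [hpow_succ]
  _ = 2*(1/2)^m := by rw [h]

/-! ### iterate computations -/

lemma wordEval_replicate (n : ℕ) (l : Letter) (x : ℝ) :
    wordEval (List.replicate n l) x = (letterFun l)^[n] x := by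
  induction n generalizing x with
  | zero => rfl
  | succ n ih =>
    rw [List.replicate_succ, wordEval_cons, ih, Function.iterate_succ_apply]

lemma x0_small {y : ℝ} (h0 : 0 ≤ y) (h : y ≤ 1/4) : letterFun Letter.x0 y = 2*y := by
  simp only [letterFun]; rw [if_neg (by linarith), if_pos h]

lemma x0_iter_spine : ∀ n : ℕ, 1 ≤ n → (letterFun Letter.x0)^[n] ((1/2:ℝ)^n) = 3/4 := by
  intro n
  induction n with
  | zero => omega
  | succ n ih =>
    intro _
    rcases Nat.eq_or_lt_of_le (Nat.one_le_iff_ne_zero.2 (by omega) : 1 ≤ n+1) with h|h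
    · -- n+1 = 1
      have hn : n = 0 := by omega
      subst hn
      show letterFun Letter.x0 ((1/2:ℝ)^1) = 3/4
      simp only [letterFun]
      norm_num
    · have hn : 1 ≤ n := by omega
      rw [Function.iterate_succ_apply, x0_small (by positivity) ?ub]
      case ub =>
        calc ((1/2:ℝ))^(n+1) ≤ (1/2)^2 := hpow_mono (by omega)
        _ = 1/4 := by norm_num
      have e : 2 * ((1/2:ℝ))^(n+1) = (1/2)^n := by rw [hpow_succ]; ring
      rw [e]
      exact ih hn

lemma x1inv_34 : letterFun Letter.x1inv (3/4 : ℝ) = 5/8 := by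
  simp only [letterFun]; norm_num

lemma x1inv_low {y : ℝ} (h : y ≤ 1/2) : letterFun Letter.x1inv y = y := by
  simp only [letterFun]; rw [if_pos h]

lemma x0inv_small {y : ℝ} (h0 : 0 ≤ y) (h : y ≤ 1/2) : letterFun Letter.x0inv y = y/2 := by
  simp only [letterFun]; rw [if_neg (by linarith), if_pos h]

lemma x0inv_iter_3pow : ∀ j : ℕ, (letterFun Letter.x0inv)^[j+1] (5/8 : ℝ) = 3*(1/2:ℝ)^(j+3) := by
  intro j
  induction j with
  | zero =>
    show letterFun Letter.x0inv (5/8 : ℝ) = 3*(1/2:ℝ)^3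
    simp only [letterFun]; norm_num
  | succ j ih =>
    rw [Function.iterate_succ_apply', ih, x0inv_small (by positivity) ?ub]
    case ub =>
      have : ((1/2:ℝ))^(j+3) ≤ (1/2)^3 := hpow_mono (by omega)
      norm_num at this ⊢
      linarith
    rw [hpow_succ (j+3)]
    ring_nf

lemma x0_iter_3small : ∀ (i m : ℕ), i + 4 ≤ m →
    (letterFun Letter.x0)^[i] (3*(1/2:ℝ)^m) = 3*(1/2:ℝ)^(m-i) := by
  intro i
  induction i with
  | zero => intro m _; rfl
  | succ i ih =>
    intro m hm
    rw [Function.iterate_succ_apply, x0_small (by positivity) ?ub]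
    case ub =>
      have : ((1/2:ℝ))^m ≤ (1/2)^5 := hpow_mono (by omega)
      norm_num at this ⊢
      linarith
    have e : 2 * (3*((1/2:ℝ))^m) = 3*(1/2)^(m-1) := by
      rw [hpow_pred (show 1 ≤ m by omega)]; ring
    rw [e, ih (m-1) (by omega)]
    congr 2
    omega

lemma x0_step_right {m : ℕ} (hm : 1 ≤ m) :
    letterFun Letter.x0 (1 - (1/2:ℝ)^m) = 1 - (1/2:ℝ)^(m+1) := by
  rcases Nat.eq_or_lt_of_le hm with h|h
  · rw [← h]
    simp only [letterFun]; norm_num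
  · have h2 : ((1/2:ℝ))^m ≤ 1/4 := by
      calc ((1/2:ℝ))^m ≤ (1/2)^2 := hpow_mono (by omega)
      _ = 1/4 := by norm_num
    have hp := hpow_pos m
    simp only [letterFun]
    rw [if_neg (by linarith), if_neg (by linarith), if_neg (by linarith), if_pos (by linarith)]
    rw [hpow_succ]; ring

lemma x0_iter_right : ∀ (n m : ℕ), 1 ≤ m →
    (letterFun Letter.x0)^[n] (1 - (1/2:ℝ)^m) = 1 - (1/2:ℝ)^(m+n) := by
  intro n
  induction n with
  | zero => intro m _; rfl
  | succ n ih =>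
    intro m hm
    rw [Function.iterate_succ_apply, x0_step_right hm, ih (m+1) (by omega)]
    congr 2
    omega

lemma x1inv_right {m : ℕ} (hm : 4 ≤ m) :
    letterFun Letter.x1inv (1 - (1/2:ℝ)^m) = 1 - (1/2:ℝ)^(m-1) := by
  have h2 : ((1/2:ℝ))^m ≤ 1/16 := by
    calc ((1/2:ℝ))^m ≤ (1/2)^4 := hpow_mono (by omega)
    _ = 1/16 := by norm_num
  have hp := hpow_pos m
  simp only [letterFun]
  rw [if_neg (by linarith), if_neg (by linarith), if_neg (by linarith), if_pos (by linarith)]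
  rw [hpow_pred (show 1 ≤ m by omega)]; ring

lemma x0inv_iter_right : ∀ (j m : ℕ), j + 2 ≤ m →
    (letterFun Letter.x0inv)^[j] (1 - (1/2:ℝ)^m) = 1 - (1/2:ℝ)^(m-j) := by
  intro j
  induction j with
  | zero => intro m _; rfl
  | succ j ih =>
    intro m hm
    have h2 : ((1/2:ℝ))^m ≤ 1/8 := by
      calc ((1/2:ℝ))^m ≤ (1/2)^3 := hpow_mono (by omega)
      _ = 1/8 := by norm_num
    have hp := hpow_pos m
    have hstep : letterFun Letter.x0inv (1 - (1/2:ℝ)^m) = 1 - (1/2:ℝ)^(m-1) := by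
      simp only [letterFun]
      rw [if_neg (by linarith), if_neg (by linarith), if_neg (by linarith), if_pos (by linarith)]
      rw [hpow_pred (show 1 ≤ m by omega)]; ring
    rw [Function.iterate_succ_apply, hstep, ih (m-1) (by omega)]
    congr 2
    omega

lemma x0_iter_3right : ∀ (i m : ℕ), 3 ≤ m →
    (letterFun Letter.x0)^[i] (1 - 3*(1/2:ℝ)^m) = 1 - 3*(1/2:ℝ)^(m+i) := by
  intro i
  induction i with
  | zero => intro m _; rfl
  | succ i ih =>
    intro m hm
    have h2 : ((1/2:ℝ))^m ≤ 1/8 := by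
      calc ((1/2:ℝ))^m ≤ (1/2)^3 := hpow_mono (by omega)
      _ = 1/8 := by norm_num
    have hp := hpow_pos m
    have hstep : letterFun Letter.x0 (1 - 3*(1/2:ℝ)^m) = 1 - 3*(1/2:ℝ)^(m+1) := by
      simp only [letterFun]
      rw [if_neg (by linarith), if_neg (by linarith), if_neg (by linarith), if_pos (by linarith)]
      rw [hpow_succ]; ring
    rw [Function.iterate_succ_apply, hstep, ih (m+1) (by omega)]
    congr 3
    omega

/-! ### endpoint evaluations -/

lemma uword_eval_a {k C : ℕ} (hC : 2 ≤ C) (hk : C + 6 ≤ k) :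
    wordEval (uword k (k - C - 2)) (vaMid k) = 3*(1/2:ℝ)^(k+C+3) := by
  rw [uword, vaMid]
  rw [wordEval_append, wordEval_append, wordEval_append, wordEval_append]
  simp only [wordEval_replicate]
  rw [x0_iter_spine (k+1) (by omega)]
  have e1 : wordEval [Letter.x1inv] (3/4 : ℝ) = 5/8 := x1inv_34
  rw [e1]
  have e2 : 2*k - 1 = (2*k-2) + 1 := by omega
  rw [e2, x0inv_iter_3pow (2*k-2)]
  have e3 : 2*k - 2 + 3 = 2*k+1 := by omega
  rw [e3]
  have hsmall : 3*((1/2:ℝ))^(2*k+1) ≤ 1/2 := by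
    have : ((1/2:ℝ))^(2*k+1) ≤ (1/2)^3 := hpow_mono (by omega)
    norm_num at this ⊢
    linarith
  have e4 : wordEval [Letter.x1inv] (3*((1/2:ℝ))^(2*k+1)) = 3*((1/2:ℝ))^(2*k+1) :=
    x1inv_low hsmall
  rw [e4, x0_iter_3small (k-C-2) (2*k+1) (by omega)]
  congr 2
  omega

lemma uword_eval_b {k C : ℕ} (hC : 2 ≤ C) (hk : C + 6 ≤ k) :
    wordEval (uword k (k - C - 2)) (vbMid k) = 1 - 3*(1/2:ℝ)^(k+1-C) := by
  rw [uword, vbMid]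
  rw [wordEval_append, wordEval_append, wordEval_append, wordEval_append]
  simp only [wordEval_replicate]
  rw [x0_iter_right (k+1) (k+1) (by omega)]
  have e0 : k+1+(k+1) = 2*k+2 := by omega
  rw [e0]
  have e1 : wordEval [Letter.x1inv] (1 - (1/2:ℝ)^(2*k+2)) = 1 - (1/2:ℝ)^(2*k+1) := by
    have := x1inv_right (m := 2*k+2) (by omega)
    rw [show 2*k+2-1 = 2*k+1 by omega] at this
    exact this
  rw [e1, x0inv_iter_right (2*k-1) (2*k+1) (by omega)]
  have e2 : 2*k+1 - (2*k-1) = 2 := by omega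
  rw [e2]
  have e3 : (1:ℝ) - (1/2)^2 = 3/4 := by norm_num
  rw [e3]
  have e4 : wordEval [Letter.x1inv] (3/4:ℝ) = 5/8 := x1inv_34
  rw [e4]
  have e5 : (5/8 : ℝ) = 1 - 3*(1/2)^3 := by norm_num
  rw [e5, x0_iter_3right (k-C-2) 3 (by omega)]
  congr 3
  omega

/-! ### exterior step -/

lemma exterior_step (l : Letter) {y : ℝ} (h : IsExteriorMid y) :
    IsExteriorMid (letterFun l y) ∨ (l = Letter.x1inv ∧ y = 3/4) := by
  rcases h with ⟨p, rfl⟩ | ⟨q, hq, rfl⟩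
  · -- left exterior
    have hp0 : (0:ℝ) < (1/2)^(p+1) := hpow_pos _
    have hp12 : ((1/2:ℝ))^(p+1) ≤ 1/2 := by
      calc ((1/2:ℝ))^(p+1) ≤ (1/2)^1 := hpow_mono (by omega)
      _ = 1/2 := by norm_num
    cases l
    case x0 =>
      left
      rcases Nat.eq_zero_or_pos p with hp|hp
      · subst hp
        right
        refine ⟨1, le_rfl, ?_⟩
        simp only [letterFun]
        norm_num
      · left
        refine ⟨p - 1, ?_⟩
        have hp4 : ((1/2:ℝ))^(p+1) ≤ 1/4 := by
          calc ((1/2:ℝ))^(p+1) ≤ (1/2)^2 := hpow_mono (by omega)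
          _ = 1/4 := by norm_num
        rw [x0_small (le_of_lt hp0) hp4]
        have e : p + 1 = (p-1+1)+1 := by omega
        rw [e, hpow_succ]; ring
    case x0inv =>
      left; left
      refine ⟨p + 1, ?_⟩
      rw [x0inv_small (le_of_lt hp0) hp12, hpow_succ (p+1)]
      ring
    case x1 =>
      left; left
      refine ⟨p, ?_⟩
      simp only [letterFun]
      rw [if_pos hp12]
    case x1inv =>
      left; left
      exact ⟨p, (x1inv_low hp12).symm ▸ rfl⟩
  · -- right exterior
    have hq0 : (0:ℝ) < (1/2)^(q+1) := hpow_pos _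
    have hq4 : ((1/2:ℝ))^(q+1) ≤ 1/4 := by
      calc ((1/2:ℝ))^(q+1) ≤ (1/2)^2 := hpow_mono (by omega)
      _ = 1/4 := by norm_num
    cases l
    case x0 =>
      left; right
      refine ⟨q + 1, by omega, ?_⟩
      simp only [letterFun]
      rw [if_neg (by linarith), if_neg (by linarith), if_neg (by linarith), if_pos (by linarith)]
      rw [hpow_succ (q+1)]; ring
    case x0inv =>
      left
      rcases Nat.eq_or_lt_of_le hq with h1|h1
      · left
        refine ⟨0, ?_⟩
        rw [← h1]
        simp only [letterFun]
        norm_num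
      · right
        refine ⟨q - 1, by omega, ?_⟩
        have hq8 : ((1/2:ℝ))^(q+1) ≤ 1/8 := by
          calc ((1/2:ℝ))^(q+1) ≤ (1/2)^3 := hpow_mono (by omega)
          _ = 1/8 := by norm_num
        simp only [letterFun]
        rw [if_neg (by linarith), if_neg (by linarith), if_neg (by linarith), if_pos (by linarith)]
        have e : q + 1 = (q-1+1)+1 := by omega
        rw [e, hpow_succ]; ring
    case x1 =>
      left; right
      rcases Nat.eq_or_lt_of_le hq with h1|h1
      · refine ⟨2, by omega, ?_⟩
        rw [← h1]
        simp only [letterFun]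
        norm_num
      · refine ⟨q + 1, by omega, ?_⟩
        have hq8 : ((1/2:ℝ))^(q+1) ≤ 1/8 := by
          calc ((1/2:ℝ))^(q+1) ≤ (1/2)^3 := hpow_mono (by omega)
          _ = 1/8 := by norm_num
        simp only [letterFun]
        rw [if_neg (by linarith), if_neg (by linarith), if_neg (by linarith), if_pos (by linarith)]
        rw [hpow_succ (q+1)]; ring
    case x1inv =>
      rcases Nat.eq_or_lt_of_le hq with h1|h1
      · right
        refine ⟨rfl, ?_⟩
        rw [← h1]; norm_num
      rcases Nat.eq_or_lt_of_le h1 with h2|h2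
      · left; right
        refine ⟨1, le_rfl, ?_⟩
        rw [← h2]
        simp only [letterFun]
        norm_num
      · left; right
        refine ⟨q - 1, by omega, ?_⟩
        have hq16 : ((1/2:ℝ))^(q+1) ≤ 1/16 := by
          calc ((1/2:ℝ))^(q+1) ≤ (1/2)^4 := hpow_mono (by omega)
          _ = 1/16 := by norm_num
        simp only [letterFun]
        rw [if_neg (by linarith), if_neg (by linarith), if_neg (by linarith), if_pos (by linarith)]
        have e : q + 1 = (q-1+1)+1 := by omega
        rw [e, hpow_succ]; ring

lemma three_pow_ne {m e : ℕ} (hm : 1 ≤ m) : 3*(1/2:ℝ)^m ≠ (1/2:ℝ)^e := by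
  intro heq
  have hp := hpow_pos m
  rcases le_or_gt m e with h|h
  · have : ((1/2:ℝ))^e ≤ (1/2)^m := hpow_mono h
    linarith
  rcases Nat.eq_or_lt_of_le (by omega : e + 1 ≤ m) with h1|h1
  · -- e = m - 1
    have he : e = m - 1 := by omega
    rw [he, hpow_pred hm] at heq
    linarith
  · -- e + 2 ≤ m
    have hm2 : ((1/2:ℝ))^(m-2) = 4*(1/2)^m := by
      have e1 : m - 2 = (m-1) - 1 := by omega
      rw [e1, hpow_pred (by omega), hpow_pred hm]
      ring
    have : ((1/2:ℝ))^(m-2) ≤ (1/2)^e := hpow_mono (by omega)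
    rw [hm2] at this
    linarith

lemma not_exterior_3left {m : ℕ} (hm : 3 ≤ m) : ¬ IsExteriorMid (3*(1/2:ℝ)^m) := by
  rintro (⟨p, hp⟩ | ⟨q, hq, hqe⟩)
  · exact three_pow_ne (by omega) hp
  · have l1 : 3*(1/2:ℝ)^m ≤ 3/8 := by
      have := hpow_mono hm
      norm_num at this ⊢
      linarith
    have l2 : ((1/2:ℝ))^(q+1) ≤ 1/4 := by
      calc ((1/2:ℝ))^(q+1) ≤ (1/2)^2 := hpow_mono (by omega)
      _ = 1/4 := by norm_num
    linarith

lemma not_exterior_3right {m : ℕ} (hm : 3 ≤ m) : ¬ IsExteriorMid (1 - 3*(1/2:ℝ)^m) := by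
  rintro (⟨p, hp⟩ | ⟨q, hq, hqe⟩)
  · have l1 : 3*(1/2:ℝ)^m ≤ 3/8 := by
      have := hpow_mono hm
      norm_num at this ⊢
      linarith
    have l2 : ((1/2:ℝ))^(p+1) ≤ 1/2 := by
      calc ((1/2:ℝ))^(p+1) ≤ (1/2)^1 := hpow_mono (by omega)
      _ = 1/2 := by norm_num
    linarith
  · have : 3*(1/2:ℝ)^m = (1/2:ℝ)^(q+1) := by linarith
    exact three_pow_ne (by omega) this

/-! ### made internal basics -/

lemma madeInternal_pos {w : Word} {y : ℝ} {t : ℕ} (h : madeInternalAt w t y) : 1 ≤ t := by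
  by_contra hc
  push_neg at hc
  interval_cases t
  have h1 := h.1
  have h2 := h.2
  simp only [Nat.zero_sub, List.take_zero] at h1 h2
  rw [wordEval_nil] at h1 h2
  rw [h1] at h2
  norm_num at h2

lemma madeInternal_le {w : Word} {y : ℝ} {t : ℕ} (h : madeInternalAt w t y)
    (hne : wordEval w y ≠ 5/8) : t ≤ w.length := by
  by_contra hc
  push_neg at hc
  have := h.1
  rw [List.take_of_length_le (by omega)] at this
  exact hne this

lemma wordEval_take_succ (w : Word) (r : ℕ) (hr : r < w.length) (x : ℝ) :
    wordEval (w.take (r+1)) x = letterFun w[r] (wordEval (w.take r) x) := by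
  rw [List.take_succ]
  rw [List.getElem?_eq_getElem hr]
  rw [Option.toList_some, wordEval_append]
  rfl

lemma exists_madeInternal {w : Word} {y : ℝ} (hy : IsExteriorMid y)
    (hfin : ¬ IsExteriorMid (wordEval w y)) : ∃ t, madeInternalAt w t y := by
  by_contra hc
  push_neg at hc
  have key : ∀ t : ℕ, IsExteriorMid (wordEval (w.take t) y) := by
    intro t
    induction t with
    | zero => simpa [wordEval_nil] using hy
    | succ t ih =>
      rcases le_or_gt w.length t with hle|hlt
      · rw [List.take_of_length_le hle] at ih
        rw [List.take_of_length_le (by omega : w.length ≤ t+1)]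
        exact ih
      · rw [wordEval_take_succ w t hlt]
        rcases exterior_step (w[t]) ih with h|⟨hl, hv⟩
        · exact h
        · exfalso
          apply hc (t+1)
          constructor
          · rw [wordEval_take_succ w t hlt, hv, hl, x1inv_34]
          · simpa using hv
  have := key w.length
  rw [List.take_of_length_le (le_refl w.length)] at this
  exact hfin this

/-! ### counting machinery -/

lemma abs_telescope (F : ℕ → ℤ) (s t : ℕ) (hst : s ≤ t) :
    |F t - F s| ≤ ∑ j ∈ Finset.Ico s t, |F (j+1) - F j| := by
  induction t, hst using Nat.le_induction with
  | base => simp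
  | succ t hst ih =>
    rw [Finset.sum_Ico_succ_top hst]
    have h3 : |F (t+1) - F s| ≤ |F (t+1) - F t| + |F t - F s| := abs_sub_le _ _ _
    linarith

lemma counting (A G : ℕ → ℤ) (n p1 p2 : ℕ) (h1 : p1 ≤ p2) (h2 : p2 ≤ n)
    (hstep : ∀ t < n, |A (t+1) - A t| + |G (t+1) - G t| ≤ 1) :
    |A p1 - A 0| + |A p2 - A p1| + |A n - A p2| + |G p1 - G 0| + |G n - G p1| ≤ (n:ℤ) := by
  have h01 : (0:ℕ) ≤ p1 := Nat.zero_le _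
  have h1n : p1 ≤ n := le_trans h1 h2
  have tA1 := abs_telescope A 0 p1 h01
  have tA2 := abs_telescope A p1 p2 h1
  have tA3 := abs_telescope A p2 n h2
  have tG1 := abs_telescope G 0 p1 h01
  have tG2 := abs_telescope G p1 n h1n
  have mA : (∑ j ∈ Finset.Ico 0 p1, |A (j+1) - A j|) + (∑ j ∈ Finset.Ico p1 p2, |A (j+1) - A j|)
      + (∑ j ∈ Finset.Ico p2 n, |A (j+1) - A j|) = ∑ j ∈ Finset.Ico 0 n, |A (j+1) - A j| := by
    rw [Finset.sum_Ico_consecutive _ h01 h1, Finset.sum_Ico_consecutive _ (le_trans h01 h1) h2]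
  have mG : (∑ j ∈ Finset.Ico 0 p1, |G (j+1) - G j|) + (∑ j ∈ Finset.Ico p1 n, |G (j+1) - G j|)
      = ∑ j ∈ Finset.Ico 0 n, |G (j+1) - G j| := Finset.sum_Ico_consecutive _ h01 h1n
  have total : (∑ j ∈ Finset.Ico 0 n, |A (j+1) - A j|) + (∑ j ∈ Finset.Ico 0 n, |G (j+1) - G j|)
      ≤ (n:ℤ) := by
    rw [← Finset.sum_add_distrib]
    calc (∑ j ∈ Finset.Ico 0 n, (|A (j+1) - A j| + |G (j+1) - G j|))
        ≤ ∑ _j ∈ Finset.Ico 0 n, (1:ℤ) := by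
          refine Finset.sum_le_sum (fun i hi => ?_)
          rw [Finset.mem_Ico] at hi
          exact hstep i hi.2
    _ = (n:ℤ) := by simp
  linarith

lemma final_ineq {k C c T x : ℤ} (hC : 2 ≤ C) (hc : c ≤ C) (hk : 1000*C < k) (hx : x ≤ 1)
    (hT : |x - (-k)| + |1 - x| + |(-(k+C)) - 1| + |(1 - x) - 2*k| + |(2*k - 1) - (1 - x)| ≤ T)
    (hTb : T ≤ 4*k - C + c) : False := by
  have e1 : |1 - x| = 1 - x := abs_of_nonneg (by linarith)
  have e2 : |(-(k+C)) - 1| = k + C + 1 := by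
    rw [abs_of_nonpos (by linarith)]; ring
  rw [e1, e2] at hT
  rcases abs_cases (x - (-k)) with ⟨h1,h1p⟩|⟨h1,h1p⟩ <;>
  rcases abs_cases ((1 - x) - 2*k) with ⟨h2,h2p⟩|⟨h2,h2p⟩ <;>
  rcases abs_cases ((2*k - 1) - (1 - x)) with ⟨h3,h3p⟩|⟨h3,h3p⟩ <;>
  rw [h1, h2, h3] at hT <;> linarith

/-! ### the joint step bound -/

lemma alpha_joint (l : Letter) {a b : ℝ} (h0 : 0 < a) (h1 : b < 1) (hab : a < b) :
    |alpha (letterFun l a) - alpha a| +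
      |(alpha (letterFun l b) - alpha (letterFun l a)) - (alpha b - alpha a)| ≤ 1 := by
  have h0b : 0 < b := lt_trans h0 hab
  have h1a : a < 1 := lt_trans hab h1
  cases l
  case x0 =>
    rw [alpha_x0 h0 h1a, alpha_x0 h0b h1]
    ring_nf
    norm_num
  case x0inv =>
    rw [alpha_x0inv h0 h1a, alpha_x0inv h0b h1]
    ring_nf
    norm_num
  case x1 =>
    rcases le_or_gt a (5/8) with ha|ha
    · rw [alpha_x1_low h0 ha]
      rcases le_or_gt b (5/8) with hb|hb
      · rw [alpha_x1_low h0b hb]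
        ring_nf
        norm_num
      · rw [alpha_x1_high hb h1]
        ring_nf
        norm_num
    · rw [alpha_x1_high ha h1a, alpha_x1_high (lt_trans ha hab) h1]
      ring_nf
      norm_num
  case x1inv =>
    rcases le_or_gt a (3/4) with ha|ha
    · rw [alpha_x1inv_low h0 ha]
      rcases le_or_gt b (3/4) with hb|hb
      · rw [alpha_x1inv_low h0b hb]
        ring_nf
        norm_num
      · rw [alpha_x1inv_high hb h1]
        ring_nf
        norm_num
    · rw [alpha_x1inv_high ha h1a, alpha_x1inv_high (lt_trans ha hab) h1]
      ring_nf
      norm_num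



theorem statement12 (L : Set Word) (c M : ℕ) (hM : 1 ≤ M)
    (hrep : ∀ f : ℝ → ℝ, InF f → ∃! w : Word, w ∈ L ∧ wordEval w = f)
    (hlen : ∀ f : ℝ → ℝ, InF f → ∀ w : Word, w ∈ L → wordEval w = f → w.length ≤ glen f + c)
    (hft : FellowTraveler L M)
    (C : ℕ) (hC : C = if Even (max c M) then max c M else max c M + 1)
    (k : ℕ) (hk : 1000 * C < k)
    (u' : Word) (huL : u' ∈ L) (hue : wordEval u' = wordEval (uword k (k - 1 - (C + 1)))) :
    CondU1 u' k := by
  -- basic constants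
  have hmax1 : 1 ≤ max c M := le_trans hM (le_max_right c M)
  have hC2 : 2 ≤ C := by
    by_cases h : Even (max c M)
    · rw [if_pos h] at hC
      obtain ⟨m, hm⟩ := h
      omega
    · rw [if_neg h] at hC
      omega
  have hcC : c ≤ C := by
    have h1 : c ≤ max c M := le_max_left c M
    by_cases h : Even (max c M)
    · rw [if_pos h] at hC; omega
    · rw [if_neg h] at hC; omega
  have hkC : C + 6 ≤ k := by omega
  have hi : k - 1 - (C + 1) = k - C - 2 := by omega
  rw [hi] at hue
  -- endpoints
  have hA : wordEval u' (vaMid k) = 3*(1/2:ℝ)^(k+C+3) := by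
    rw [hue]; exact uword_eval_a hC2 hkC
  have hB : wordEval u' (vbMid k) = 1 - 3*(1/2:ℝ)^(k+1-C) := by
    rw [hue]; exact uword_eval_b hC2 hkC
  -- position facts
  have hva0 : 0 < vaMid k := hpow_pos _
  have hhalf : ((1/2:ℝ))^(k+1) ≤ 1/4 := by
    calc ((1/2:ℝ))^(k+1) ≤ (1/2)^2 := hpow_mono (by omega)
    _ = 1/4 := by norm_num
  have hva1 : vaMid k < 1 := by rw [vaMid]; linarith
  have hvb0 : 0 < vbMid k := by rw [vbMid]; linarith
  have hvb1 : vbMid k < 1 := by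
    rw [vbMid]
    have := hpow_pos (k+1)
    linarith
  have hvab : vaMid k < vbMid k := by rw [vaMid, vbMid]; linarith
  -- existence
  have ex_a : ∃ t, madeInternalAt u' t (vaMid k) := by
    refine exists_madeInternal (Or.inl ⟨k, rfl⟩) ?_
    rw [hA]
    exact not_exterior_3left (by omega)
  have ex_b : ∃ t, madeInternalAt u' t (vbMid k) := by
    refine exists_madeInternal (Or.inr ⟨k, by omega, rfl⟩) ?_
    rw [hB]
    exact not_exterior_3right (by omega)
  refine ⟨ex_a, ex_b, ?_⟩
  intro s t hs ht
  by_contra hst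
  push_neg at hst
  -- t ≤ s; first, t ≠ s
  have hane : wordEval u' (vaMid k) ≠ 5/8 := by
    rw [hA]
    have : ((1/2:ℝ))^(k+C+3) ≤ (1/2)^5 := hpow_mono (by omega)
    norm_num at this ⊢
    linarith
  have hbne : wordEval u' (vbMid k) ≠ 5/8 := by
    rw [hB]
    have : ((1/2:ℝ))^(k+1-C) ≤ (1/2)^5 := hpow_mono (by omega)
    norm_num at this ⊢
    linarith
  have hts : t < s := by
    rcases Nat.eq_or_lt_of_le hst with h|h
    · exfalso
      subst h
      have hmono := wordEval_strictMono (u'.take t) hvab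
      rw [hs.1, ht.1] at hmono
      exact lt_irrefl _ hmono
    · exact h
  have ht1 : 1 ≤ t := madeInternal_pos ht
  have hs1 : 1 ≤ s := madeInternal_pos hs
  have hsn : s ≤ u'.length := madeInternal_le hs hane
  -- step bound
  have hstep : ∀ r, r < u'.length →
      |alpha (wordEval (u'.take (r+1)) (vaMid k)) - alpha (wordEval (u'.take r) (vaMid k))| +
      |(alpha (wordEval (u'.take (r+1)) (vbMid k)) - alpha (wordEval (u'.take (r+1)) (vaMid k))) -
        (alpha (wordEval (u'.take r) (vbMid k)) - alpha (wordEval (u'.take r) (vaMid k)))| ≤ 1 := by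
    intro r hr
    rw [wordEval_take_succ u' r hr (vaMid k), wordEval_take_succ u' r hr (vbMid k)]
    exact alpha_joint _ ((wordEval_mem (u'.take r) hva0 hva1).1)
      ((wordEval_mem (u'.take r) hvb0 hvb1).2)
      (wordEval_strictMono (u'.take r) hvab)
  -- counting
  have key : |alpha (wordEval (u'.take (t-1)) (vaMid k)) - alpha (wordEval (u'.take 0) (vaMid k))| +
      |alpha (wordEval (u'.take (s-1)) (vaMid k)) - alpha (wordEval (u'.take (t-1)) (vaMid k))| +
      |alpha (wordEval (u'.take u'.length) (vaMid k)) - alpha (wordEval (u'.take (s-1)) (vaMid k))| +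
      |(alpha (wordEval (u'.take (t-1)) (vbMid k)) - alpha (wordEval (u'.take (t-1)) (vaMid k))) -
        (alpha (wordEval (u'.take 0) (vbMid k)) - alpha (wordEval (u'.take 0) (vaMid k)))| +
      |(alpha (wordEval (u'.take u'.length) (vbMid k)) - alpha (wordEval (u'.take u'.length) (vaMid k))) -
        (alpha (wordEval (u'.take (t-1)) (vbMid k)) - alpha (wordEval (u'.take (t-1)) (vaMid k)))| ≤
      (u'.length : ℤ) :=
    counting (fun r => alpha (wordEval (u'.take r) (vaMid k)))
      (fun r => alpha (wordEval (u'.take r) (vbMid k)) - alpha (wordEval (u'.take r) (vaMid k)))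
      u'.length (t-1) (s-1) (by omega) (by omega) hstep
  -- values
  have vA0 : alpha (wordEval (u'.take 0) (vaMid k)) = -(k:ℤ) := by
    rw [List.take_zero, wordEval_nil, vaMid, alpha_pow_left (by omega)]
    push_cast; ring
  have vB0 : alpha (wordEval (u'.take 0) (vbMid k)) = (k:ℤ) := by
    rw [List.take_zero, wordEval_nil, vbMid, alpha_pow_right (by omega)]
    push_cast; ring
  have vAn : alpha (wordEval (u'.take u'.length) (vaMid k)) = -((k:ℤ) + C) := by
    rw [List.take_length, hA, alpha_3pow_left (by omega)]
    push_cast; ring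
  have vBn : alpha (wordEval (u'.take u'.length) (vbMid k)) = (k:ℤ) - C - 1 := by
    rw [List.take_length, hB, alpha_3pow_right (by omega)]
    omega
  have vAp2 : alpha (wordEval (u'.take (s-1)) (vaMid k)) = 1 := by
    rw [hs.2]; exact alpha_34
  have vBp1 : alpha (wordEval (u'.take (t-1)) (vbMid k)) = 1 := by
    rw [ht.2]; exact alpha_34
  -- budget
  have hlen1 : u'.length ≤ glen (wordEval u') + c :=
    hlen (wordEval u') (InF_wordEval u') u' huL rfl
  have hglen : glen (wordEval u') ≤ (uword k (k-C-2)).length :=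
    Nat.sInf_le ⟨uword k (k-C-2), hue.symm, rfl⟩
  have hulen : (uword k (k-C-2)).length = 4*k - C := by
    simp only [uword, List.length_append, List.length_replicate, List.length_cons,
      List.length_nil]
    omega
  have hbudget : (u'.length : ℤ) ≤ 4*(k:ℤ) - C + c := by
    rw [hulen] at hglen
    omega
  -- abs bounds
  have b1 := neg_le_abs (alpha (wordEval (u'.take (t-1)) (vaMid k)) -
    alpha (wordEval (u'.take 0) (vaMid k)))
  have b2 := le_abs_self (alpha (wordEval (u'.take (s-1)) (vaMid k)) -
    alpha (wordEval (u'.take (t-1)) (vaMid k)))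
  have b3 := neg_le_abs (alpha (wordEval (u'.take u'.length) (vaMid k)) -
    alpha (wordEval (u'.take (s-1)) (vaMid k)))
  have b4 := neg_le_abs ((alpha (wordEval (u'.take (t-1)) (vbMid k)) -
      alpha (wordEval (u'.take (t-1)) (vaMid k))) -
    (alpha (wordEval (u'.take 0) (vbMid k)) - alpha (wordEval (u'.take 0) (vaMid k))))
  have b5 := le_abs_self ((alpha (wordEval (u'.take u'.length) (vbMid k)) -
      alpha (wordEval (u'.take u'.length) (vaMid k))) -
    (alpha (wordEval (u'.take (t-1)) (vbMid k)) - alpha (wordEval (u'.take (t-1)) (vaMid k))))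
  have hC2Z : (2:ℤ) ≤ (C:ℤ) := by exact_mod_cast hC2
  have hcCZ : (c:ℤ) ≤ (C:ℤ) := by exact_mod_cast hcC
  simp only [vA0, vB0, vAn, vBn, vAp2, vBp1] at b1 b2 b3 b4 b5 key
  linarith [key, b1, b2, b3, b4, b5, hbudget, hC2Z, hcCZ]


end ThompsonAut
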